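/- arXiv:2002.08576 — 2 statements merged into one kernel-verified Lean document; each statement's English description precedes it below -/
import Mathlib

section
/- Let π be a secant plane and let x be a black point contained in π. Then there are exactly q lines of π through x which belong to S. -/
open Submodule Set

/-- The points of `PG(3,q)`: the 1-dimensional subspaces of a 4-dimensional
vector space over the field `K` of order `q`. -/
def pgPoint (K : Type) [Field K] : Set (Submodule K (Fin 4 → K)) :=
  {W | Module.finrank K ↥W = 1}

/-- The lines of `PG(3,q)`: the 2-dimensional subspaces. -/
def pgLine (K : Type) [Field K] : Set (Submodule K (Fin 4 → K)) :=
  {W | Module.finrank K ↥W = 2}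

/-- The planes of `PG(3,q)`: the 3-dimensional subspaces. -/
def pgPlane (K : Type) [Field K] : Set (Submodule K (Fin 4 → K)) :=
  {W | Module.finrank K ↥W = 3}

/-- The lines of the family `S` passing through the point `p`. -/
def linesThru (K : Type) [Field K] (S : Set (Submodule K (Fin 4 → K)))
    (p : Submodule K (Fin 4 → K)) : Set (Submodule K (Fin 4 → K)) :=
  {l | l ∈ S ∧ p ≤ l}

/-- The lines of the family `S` contained in the plane `π` (the set `S_π`). -/
def linesIn (K : Type) [Field K] (S : Set (Submodule K (Fin 4 → K)))
    (π : Submodule K (Fin 4 → K)) : Set (Submodule K (Fin 4 → K)) :=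
  {l | l ∈ S ∧ l ≤ π}

/-- The lines of `S_π` belonging to the pencil of lines of the plane `π`
through the point `p`. -/
def pencilS (K : Type) [Field K] (S : Set (Submodule K (Fin 4 → K)))
    (p π : Submodule K (Fin 4 → K)) : Set (Submodule K (Fin 4 → K)) :=
  {l | l ∈ S ∧ p ≤ l ∧ l ≤ π}

/-- Property (P1): every point lies on exactly `q(q+1)/2` or exactly `q^2`
lines of `S`, and both numbers are attained. -/
def P1 (K : Type) [Field K] (S : Set (Submodule K (Fin 4 → K))) (q : ℕ) : Prop :=
  (∀ p ∈ pgPoint K, (linesThru K S p).ncard = q * (q + 1) / 2 ∨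
      (linesThru K S p).ncard = q ^ 2) ∧
  (∃ p ∈ pgPoint K, (linesThru K S p).ncard = q * (q + 1) / 2) ∧
  (∃ p ∈ pgPoint K, (linesThru K S p).ncard = q ^ 2)

/-- Property (P2): every plane contains exactly `q(q+1)/2` or exactly `q^2`
lines of `S`. -/
def P2 (K : Type) [Field K] (S : Set (Submodule K (Fin 4 → K))) (q : ℕ) : Prop :=
  ∀ π ∈ pgPlane K, (linesIn K S π).ncard = q * (q + 1) / 2 ∨
    (linesIn K S π).ncard = q ^ 2

/-- Property (P2a): if a plane contains `q^2` lines of `S`, then every pencil of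
lines in that plane contains `0` or `q` lines of `S`. -/
def P2a (K : Type) [Field K] (S : Set (Submodule K (Fin 4 → K))) (q : ℕ) : Prop :=
  ∀ π ∈ pgPlane K, (linesIn K S π).ncard = q ^ 2 →
    ∀ p ∈ pgPoint K, p ≤ π →
      (pencilS K S p π).ncard = 0 ∨ (pencilS K S p π).ncard = q

/-- Property (P2b): if a plane contains `q(q+1)/2` lines of `S`, then every
pencil of lines in that plane contains `(q-1)/2`, `(q+1)/2` or `q` lines of `S`. -/
def P2b (K : Type) [Field K] (S : Set (Submodule K (Fin 4 → K))) (q : ℕ) : Prop :=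
  ∀ π ∈ pgPlane K, (linesIn K S π).ncard = q * (q + 1) / 2 →
    ∀ p ∈ pgPoint K, p ≤ π →
      (pencilS K S p π).ncard = (q - 1) / 2 ∨
      (pencilS K S p π).ncard = (q + 1) / 2 ∨
      (pencilS K S p π).ncard = q

/-- A point is black if it lies on exactly `q^2` lines of `S`. -/
def IsBlack (K : Type) [Field K] (S : Set (Submodule K (Fin 4 → K))) (q : ℕ)
    (p : Submodule K (Fin 4 → K)) : Prop :=
  p ∈ pgPoint K ∧ (linesThru K S p).ncard = q ^ 2

/-- A plane is tangent if it contains exactly `q^2` lines of `S`. -/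
def IsTangent (K : Type) [Field K] (S : Set (Submodule K (Fin 4 → K))) (q : ℕ)
    (π : Submodule K (Fin 4 → K)) : Prop :=
  π ∈ pgPlane K ∧ (linesIn K S π).ncard = q ^ 2

/-- A plane is secant if it contains exactly `q(q+1)/2` lines of `S`. -/
def IsSecant (K : Type) [Field K] (S : Set (Submodule K (Fin 4 → K))) (q : ℕ)
    (π : Submodule K (Fin 4 → K)) : Prop :=
  π ∈ pgPlane K ∧ (linesIn K S π).ncard = q * (q + 1) / 2

/-- For a secant plane `π`, the set `α(π)` of points of `π` lying on exactly
`(q-1)/2` lines of `S_π`. -/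
def alphaSet (K : Type) [Field K] (S : Set (Submodule K (Fin 4 → K))) (q : ℕ)
    (π : Submodule K (Fin 4 → K)) : Set (Submodule K (Fin 4 → K)) :=
  {p | p ∈ pgPoint K ∧ p ≤ π ∧ (pencilS K S p π).ncard = (q - 1) / 2}

/-- For a secant plane `π`, the set `β(π)` of points of `π` lying on exactly
`(q+1)/2` lines of `S_π`. -/
def betaSet (K : Type) [Field K] (S : Set (Submodule K (Fin 4 → K))) (q : ℕ)
    (π : Submodule K (Fin 4 → K)) : Set (Submodule K (Fin 4 → K)) :=
  {p | p ∈ pgPoint K ∧ p ≤ π ∧ (pencilS K S p π).ncard = (q + 1) / 2}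

/-- For a secant plane `π`, the set `γ(π)` of points of `π` lying on exactly
`q` lines of `S_π`. -/
def gammaSet (K : Type) [Field K] (S : Set (Submodule K (Fin 4 → K))) (q : ℕ)
    (π : Submodule K (Fin 4 → K)) : Set (Submodule K (Fin 4 → K)) :=
  {p | p ∈ pgPoint K ∧ p ≤ π ∧ (pencilS K S p π).ncard = q}


/-!
Let `x` be black. Of the `q² + q + 1` lines through `x`, exactly `q + 1` are not in `S`; call
this set `T`. In a plane `ρ` through `x` the `q + 1` lines of the pencil at `x` split into lines
of `S` and lines of `T`, and by (P2), (P2a), (P2b) at most `q` of them lie in `S`, so every plane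
through `x` contains a line of `T`. In the quotient plane `PG(2, q)` at `x`, `T` is thus a set of
`q + 1` points meeting every line. Counting incidences and pairs of points of `T` gives
`∑ (N ρ - 1) (q + 1 - N ρ) = 0` over the planes `ρ` through `x`, where `N ρ` is the number of
lines of `T` in `ρ`; each term is nonnegative, so every plane through `x` contains `1` or `q + 1`
lines of `T`, that is, `q` or `0` lines of `S`. For a secant plane (P2b) excludes `0`, as `q ≥ 3`.
-/

open Module Finset

section SubspaceCounting

variable {K V : Type*} [Field K] [AddCommGroup V] [Module K V] [FiniteDimensional K V]

theorem ncard_coe_submodule (W : Submodule K V) :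
    (W : Set V).ncard = Nat.card K ^ finrank K W := by
  rw [← Nat.card_coe_set_eq]
  exact Module.natCard_eq_pow_finrank (V := W)

variable [Finite K]

instance : Finite (Submodule K V) :=
  have := Module.finite_of_finite K (M := V)
  Finite.of_injective _ SetLike.coe_injective

noncomputable instance : Fintype (Submodule K V) := Fintype.ofFinite _

open scoped Classical

theorem card_finrank_succ_between_mul {U W : Submodule K V} (hUW : U ≤ W) :
    #{Y : Submodule K V | finrank K Y = finrank K U + 1 ∧ U ≤ Y ∧ Y ≤ W} *
        (Nat.card K ^ (finrank K U + 1) - Nat.card K ^ finrank K U) =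
      Nat.card K ^ finrank K W - Nat.card K ^ finrank K U := by
  have := Module.finite_of_finite K (M := V)
  have := Fintype.ofFinite V
  -- double count pairs `(v, Y)` with `v ∈ Y \ U`: each `v ∈ W \ U` lies in exactly `U ⊔ K ∙ v`
  have key := card_mul_eq_card_mul (fun v Y => v ∈ Y)
    (s := ((W : Set V) \ U).toFinset)
    (t := {Y : Submodule K V | finrank K Y = finrank K U + 1 ∧ U ≤ Y ∧ Y ≤ W}) (m := 1)
    (n := Nat.card K ^ (finrank K U + 1) - Nat.card K ^ finrank K U) ?_ ?_
  · rw [mul_one, ← Set.ncard_eq_toFinset_card', Set.ncard_sdiff hUW, ncard_coe_submodule,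
      ncard_coe_submodule] at key
    exact key.symm
  · intro v hv
    simp only [Set.mem_toFinset, Set.mem_sdiff, SetLike.mem_coe] at hv
    rw [card_eq_one]
    refine ⟨U ⊔ K ∙ v, ?_⟩
    ext Y
    simp only [bipartiteAbove, mem_filter, Finset.mem_univ, true_and, Finset.mem_singleton]
    constructor
    · rintro ⟨⟨hY, hUY, -⟩, hvY⟩
      refine (eq_of_le_of_finrank_eq (sup_le hUY ((span_singleton_le_iff_mem v Y).2 hvY)) ?_).symm
      rw [hY, finrank_sup_span_singleton hv.2]
    · rintro rfl
      exact ⟨⟨finrank_sup_span_singleton hv.2, le_sup_left,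
        sup_le hUW ((span_singleton_le_iff_mem v W).2 hv.1)⟩,
        mem_sup_right (mem_span_singleton_self v)⟩
  · intro Y hY
    simp only [mem_filter, Finset.mem_univ, true_and] at hY
    obtain ⟨hY, hUY, hYW⟩ := hY
    have : ((W : Set V) \ U).toFinset.bipartiteBelow (fun v Y => v ∈ Y) Y =
        ((Y : Set V) \ U).toFinset := by
      ext v
      simp only [bipartiteBelow, mem_filter, Set.mem_toFinset, Set.mem_sdiff, SetLike.mem_coe]
      exact ⟨fun h => ⟨h.2, h.1.2⟩, fun h => ⟨⟨hYW h.1, h.2⟩, h.1⟩⟩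
    rw [this, ← Set.ncard_eq_toFinset_card', Set.ncard_sdiff hUY, ncard_coe_submodule,
      ncard_coe_submodule, hY]

theorem card_finrank_succ_between {U W : Submodule K V} (hUW : U ≤ W) :
    #{Y : Submodule K V | finrank K Y = finrank K U + 1 ∧ U ≤ Y ∧ Y ≤ W} =
      ∑ i ∈ range (finrank K W - finrank K U), Nat.card K ^ i := by
  have key := card_finrank_succ_between_mul hUW
  obtain ⟨k, hk⟩ := Nat.exists_eq_add_of_le (Submodule.finrank_mono hUW)
  rw [hk, Nat.add_sub_cancel_left]
  rw [hk] at key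
  set c := #{Y : Submodule K V | finrank K Y = finrank K U + 1 ∧ U ≤ Y ∧ Y ≤ W}
  set q := Nat.card K
  set d := finrank K U
  have hq : 1 < q := Finite.one_lt_card
  zify [Nat.pow_le_pow_right hq.le (Nat.le_succ d),
    Nat.pow_le_pow_right hq.le (Nat.le_add_right d k)] at key
  have hne : (q : ℤ) ^ d * (q - 1) ≠ 0 := by
    have : (1 : ℤ) < q := by exact_mod_cast hq
    positivity
  refine Nat.cast_injective (R := ℤ) (mul_right_cancel₀ hne ?_)
  push_cast
  linear_combination key - (q : ℤ) ^ d * geom_sum_mul (q : ℤ) k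

end SubspaceCounting

theorem card_bipartiteBelow_eq_one_or_of_forall_nonempty {α β : Type*} (r : α → β → Prop)
    [∀ a b, Decidable (r a b)] {T : Finset α} {t : Finset β} {q : ℕ}
    (hT : #T = q + 1) (ht : #t = q ^ 2 + q + 1)
    (hdeg : ∀ a ∈ T, #(t.bipartiteAbove r a) = q + 1)
    (hpair : ∀ a ∈ T, ∀ a' ∈ T, a ≠ a' → #{b ∈ t | r a b ∧ r a' b} = 1)
    (hblock : ∀ b ∈ t, (T.bipartiteBelow r b).Nonempty) {b : β} (hb : b ∈ t) :
    #(T.bipartiteBelow r b) = 1 ∨ #(T.bipartiteBelow r b) = q + 1 := by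
  classical
  set N : β → ℕ := fun b => #(T.bipartiteBelow r b)
  have hsum : ∑ b ∈ t, N b = (q + 1) * (q + 1) := by
    rw [← sum_card_bipartiteAbove_eq_sum_card_bipartiteBelow, sum_const_nat hdeg, hT]
  have hsum_pairs : ∑ b ∈ t, (N b * N b - N b) = q * (q + 1) := by
    have hpairs := sum_card_bipartiteAbove_eq_sum_card_bipartiteBelow
      (s := T.offDiag) (t := t) (fun p b => r p.1 b ∧ r p.2 b)
    rw [sum_const_nat (m := 1) ?_] at hpairs
    · have hbelow : ∀ b, T.offDiag.bipartiteBelow (fun p b => r p.1 b ∧ r p.2 b) b =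
          (T.bipartiteBelow r b).offDiag := by
        intro b
        ext p
        simp only [bipartiteBelow, mem_filter, Finset.mem_offDiag]
        tauto
      simp only [hbelow, offDiag_card] at hpairs
      rw [← hpairs, hT, mul_one]
      exact Nat.sub_eq_of_eq_add (by ring)
    · rintro ⟨a, a'⟩ h
      rw [Finset.mem_offDiag] at h
      exact hpair a h.1 a' h.2.1 h.2.2
  have hsum_sq : ∑ b ∈ t, N b * N b = q * (q + 1) + (q + 1) * (q + 1) := by
    rw [← hsum_pairs, ← hsum, ← sum_add_distrib]
    exact sum_congr rfl fun b _ => (Nat.sub_add_cancel (Nat.le_mul_self _)).symm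
  have hzero : ∑ b ∈ t, ((N b : ℤ) - 1) * (q + 1 - N b) = 0 := by
    have hsum' : ∑ b ∈ t, (N b : ℤ) = (q + 1) * (q + 1) := by exact_mod_cast hsum
    have hsum_sq' : ∑ b ∈ t, (N b : ℤ) * N b = q * (q + 1) + (q + 1) * (q + 1) := by
      exact_mod_cast hsum_sq
    calc ∑ b ∈ t, ((N b : ℤ) - 1) * (q + 1 - N b)
        = (q + 2) * ∑ b ∈ t, (N b : ℤ) - ∑ b ∈ t, (N b : ℤ) * N b - #t * (q + 1) := by
          rw [mul_sum, ← sum_sub_distrib, ← nsmul_eq_mul, ← sum_const, ← sum_sub_distrib]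
          exact sum_congr rfl fun _ _ => by ring
      _ = 0 := by
          rw [hsum', hsum_sq', ht]
          push_cast
          ring
  have hbounds : ∀ b ∈ t, (1 : ℤ) ≤ N b ∧ (N b : ℤ) ≤ q + 1 := fun b hb =>
    ⟨by exact_mod_cast card_pos.2 (hblock b hb),
      by exact_mod_cast (hT ▸ Finset.card_le_card (filter_subset _ _) : N b ≤ q + 1)⟩
  have hterm := (sum_eq_zero_iff_of_nonneg fun b hb => mul_nonneg
    (sub_nonneg.2 (hbounds b hb).1) (sub_nonneg.2 (hbounds b hb).2)).1 hzero b hb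
  rcases mul_eq_zero.1 hterm with h | h
  · exact Or.inl (by linarith)
  · exact Or.inr (by linarith)

section ProjectiveSpace

variable {K V : Type*} [Field K] [AddCommGroup V] [Module K V] [FiniteDimensional K V]

theorem finrank_sup_eq_three_of_ne {x m₁ m₂ : Submodule K V} (hx : finrank K x = 1)
    (h₁ : finrank K m₁ = 2) (h₂ : finrank K m₂ = 2) (hx₁ : x ≤ m₁) (hx₂ : x ≤ m₂)
    (hne : m₁ ≠ m₂) : finrank K ↥(m₁ ⊔ m₂) = 3 := by
  have hinf_lt : m₁ ⊓ m₂ < m₁ :=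
    inf_lt_left.2 fun h => hne (eq_of_le_of_finrank_eq h (h₁.trans h₂.symm))
  have hlt := finrank_lt_finrank_of_lt hinf_lt
  have hge := hx ▸ finrank_mono (le_inf hx₁ hx₂)
  have := finrank_sup_add_finrank_inf_eq m₁ m₂
  omega

variable [Finite K]

open scoped Classical

theorem card_lines_through_point_in_plane {x ρ : Submodule K V} (hx : finrank K x = 1)
    (hρ : finrank K ρ = 3) (hxρ : x ≤ ρ) :
    #{m : Submodule K V | finrank K m = 2 ∧ x ≤ m ∧ m ≤ ρ} = Nat.card K + 1 := by
  simpa [hx, hρ, sum_range_succ, add_comm] using card_finrank_succ_between hxρ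

theorem card_lines_through_point (hV : finrank K V = 4) {x : Submodule K V} (hx : finrank K x = 1) :
    #{m : Submodule K V | finrank K m = 2 ∧ x ≤ m} = Nat.card K ^ 2 + Nat.card K + 1 := by
  have h := card_finrank_succ_between (le_top (a := x))
  simp only [hx, hV, finrank_top, le_top, and_true, sum_range_succ] at h
  rw [h]
  ring

theorem card_planes_through_line (hV : finrank K V = 4) {m : Submodule K V} (hm : finrank K m = 2) :
    #{ρ : Submodule K V | finrank K ρ = 3 ∧ m ≤ ρ} = Nat.card K + 1 := by
  simpa [hm, hV, sum_range_succ, add_comm] using card_finrank_succ_between (le_top (a := m))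

theorem card_planes_through_point_containing_line (hV : finrank K V = 4)
    {x m : Submodule K V} (hm : finrank K m = 2) (hxm : x ≤ m) :
    #(({ρ | finrank K ρ = 3 ∧ x ≤ ρ} : Finset (Submodule K V)).bipartiteAbove (· ≤ ·) m) =
      Nat.card K + 1 := by
  rw [← card_planes_through_line hV hm]
  congr 1
  ext ρ
  simp only [bipartiteAbove, mem_filter, Finset.mem_univ, true_and]
  exact ⟨fun h => ⟨h.1.1, h.2⟩, fun h => ⟨⟨h.1, hxm.trans h.2⟩, h.2⟩⟩

theorem card_planes_through_point (hV : finrank K V = 4) {x : Submodule K V}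
    (hx : finrank K x = 1) :
    #{ρ : Submodule K V | finrank K ρ = 3 ∧ x ≤ ρ} = Nat.card K ^ 2 + Nat.card K + 1 := by
  have key := card_mul_eq_card_mul (· ≤ ·)
    (s := {m : Submodule K V | finrank K m = 2 ∧ x ≤ m})
    (t := {ρ : Submodule K V | finrank K ρ = 3 ∧ x ≤ ρ}) (m := Nat.card K + 1)
    (n := Nat.card K + 1) ?_ ?_
  · rw [card_lines_through_point hV hx] at key
    exact (Nat.eq_of_mul_eq_mul_right (Nat.succ_pos _) key).symm
  · intro m hm
    simp only [mem_filter, Finset.mem_univ, true_and] at hm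
    exact card_planes_through_point_containing_line hV hm.1 hm.2
  · intro ρ hρ
    simp only [mem_filter, Finset.mem_univ, true_and] at hρ
    rw [← card_lines_through_point_in_plane hx hρ.1 hρ.2]
    congr 1
    ext m
    simp only [bipartiteBelow, mem_filter, Finset.mem_univ, true_and, and_assoc]

theorem card_planes_through_two_lines {x m₁ m₂ : Submodule K V} (hx : finrank K x = 1)
    (h₁ : finrank K m₁ = 2) (h₂ : finrank K m₂ = 2) (hx₁ : x ≤ m₁) (hx₂ : x ≤ m₂)
    (hne : m₁ ≠ m₂) : #{ρ : Submodule K V | finrank K ρ = 3 ∧ m₁ ≤ ρ ∧ m₂ ≤ ρ} = 1 := by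
  have hsup := finrank_sup_eq_three_of_ne hx h₁ h₂ hx₁ hx₂ hne
  rw [card_eq_one]
  refine ⟨m₁ ⊔ m₂, ?_⟩
  ext ρ
  simp only [mem_filter, Finset.mem_univ, true_and, Finset.mem_singleton]
  constructor
  · rintro ⟨hρ, hρ₁, hρ₂⟩
    exact (eq_of_le_of_finrank_eq (sup_le hρ₁ hρ₂) (hsup.trans hρ.symm)).symm
  · rintro rfl
    exact ⟨hsup, le_sup_left, le_sup_right⟩

theorem card_filter_le_eq_one_or_of_forall_exists_le (hV : finrank K V = 4)
    {x : Submodule K V} (hx : finrank K x = 1) {T : Finset (Submodule K V)}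
    (hT : ∀ m ∈ T, finrank K m = 2 ∧ x ≤ m) (hTcard : #T = Nat.card K + 1)
    (hblock : ∀ ρ : Submodule K V, finrank K ρ = 3 → x ≤ ρ → ∃ m ∈ T, m ≤ ρ)
    {ρ : Submodule K V} (hρ : finrank K ρ = 3) (hxρ : x ≤ ρ) :
    #{m ∈ T | m ≤ ρ} = 1 ∨ #{m ∈ T | m ≤ ρ} = Nat.card K + 1 := by
  refine card_bipartiteBelow_eq_one_or_of_forall_nonempty (· ≤ ·)
    (t := {ρ : Submodule K V | finrank K ρ = 3 ∧ x ≤ ρ}) hTcard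
    (card_planes_through_point hV hx) (fun m hm => ?_) (fun m₁ hm₁ m₂ hm₂ hne => ?_)
    (fun ρ hρ => ?_) (by simp [hρ, hxρ])
  · exact card_planes_through_point_containing_line hV (hT m hm).1 (hT m hm).2
  · rw [← card_planes_through_two_lines hx (hT m₁ hm₁).1 (hT m₂ hm₂).1 (hT m₁ hm₁).2
      (hT m₂ hm₂).2 hne, filter_filter]
    congr 1
    ext ρ
    simp only [mem_filter, Finset.mem_univ, true_and]
    exact ⟨fun h => ⟨h.1.1, h.2⟩, fun h => ⟨⟨h.1, (hT m₁ hm₁).2.trans h.2.1⟩, h.2⟩⟩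
  · simp only [mem_filter, Finset.mem_univ, true_and] at hρ
    obtain ⟨m, hm, hmρ⟩ := hblock ρ hρ.1 hρ.2
    exact ⟨m, mem_filter.2 ⟨hm, hmρ⟩⟩

end ProjectiveSpace

section LineFamily

variable {K : Type} [Field K] {S : Set (Submodule K (Fin 4 → K))} {q : ℕ}

theorem ncard_pencilS_le (h2 : P2 K S q) (h2a : P2a K S q) (h2b : P2b K S q)
    {p ρ : Submodule K (Fin 4 → K)} (hρ : ρ ∈ pgPlane K) (hp : p ∈ pgPoint K) (hpρ : p ≤ ρ) :
    (pencilS K S p ρ).ncard ≤ q := by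
  rcases h2 ρ hρ with h | h
  · rcases h2b ρ hρ h p hp hpρ with h | h | h <;> omega
  · rcases h2a ρ hρ h p hp hpρ with h | h <;> omega

variable [Finite K]

open scoped Classical

theorem ncard_pencilS_eq_zero_or_of_isBlack (hq : Nat.card K = q) (hS : S ⊆ pgLine K)
    (h2 : P2 K S q) (h2a : P2a K S q) (h2b : P2b K S q) {x : Submodule K (Fin 4 → K)}
    (hx : IsBlack K S q x) {ρ : Submodule K (Fin 4 → K)} (hρ : ρ ∈ pgPlane K) (hxρ : x ≤ ρ) :
    (pencilS K S x ρ).ncard = 0 ∨ (pencilS K S x ρ).ncard = q := by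
  obtain ⟨hx, hxS⟩ := hx
  set T : Finset (Submodule K (Fin 4 → K)) := {m | finrank K m = 2 ∧ x ≤ m ∧ m ∉ S}
  have hsplit : ∀ σ : Submodule K (Fin 4 → K), finrank K σ = 3 → x ≤ σ →
      (pencilS K S x σ).ncard + #{m ∈ T | m ≤ σ} = q + 1 := by
    intro σ hσ hxσ
    rw [← hq, ← card_lines_through_point_in_plane hx hσ hxσ,
      ← card_filter_add_card_filter_not (s := {m : Submodule K (Fin 4 → K) | finrank K m = 2 ∧ x ≤ m ∧ m ≤ σ})
        (· ∈ S)]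
    congr 1
    · rw [← Set.ncard_coe_finset]
      congr 1
      ext m
      simp only [pencilS, coe_filter, mem_filter, Finset.mem_univ, true_and, Set.mem_ofPred_eq]
      exact ⟨fun h => ⟨⟨hS h.1, h.2⟩, h.1⟩, fun h => ⟨h.2, h.1.2⟩⟩
    · congr 1
      ext m
      simp only [T, mem_filter, Finset.mem_univ, true_and]
      tauto
  have hTcard : #T = q + 1 := by
    have hlines := card_filter_add_card_filter_not (p := (· ∈ S))
      (s := ({m | finrank K m = 2 ∧ x ≤ m} : Finset (Submodule K (Fin 4 → K))))
    rw [card_lines_through_point (finrank_fin_fun K) hx, hq] at hlines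
    have hin : #{m ∈ ({m | finrank K m = 2 ∧ x ≤ m} : Finset (Submodule K (Fin 4 → K))) | m ∈ S} =
        q ^ 2 := by
      rw [← hxS, ← Set.ncard_coe_finset]
      congr 1
      ext m
      simp only [linesThru, coe_filter, mem_filter, Finset.mem_univ, true_and, Set.mem_ofPred_eq]
      exact ⟨fun h => ⟨h.2, h.1.2⟩, fun h => ⟨⟨hS h.1, h.2⟩, h.1⟩⟩
    have hout : {m ∈ ({m | finrank K m = 2 ∧ x ≤ m} : Finset (Submodule K (Fin 4 → K))) | m ∉ S} =
        T := by
      ext m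
      simp only [T, mem_filter, Finset.mem_univ, true_and, and_assoc]
    rw [hin, hout] at hlines
    omega
  have hblock : ∀ σ : Submodule K (Fin 4 → K), finrank K σ = 3 → x ≤ σ → ∃ m ∈ T, m ≤ σ := by
    intro σ hσ hxσ
    have hpos : 0 < #{m ∈ T | m ≤ σ} := by
      have := ncard_pencilS_le h2 h2a h2b hσ hx hxσ
      have := hsplit σ hσ hxσ
      omega
    obtain ⟨m, hm⟩ := card_pos.1 hpos
    exact ⟨m, (mem_filter.1 hm).1, (mem_filter.1 hm).2⟩
  have hT : ∀ m ∈ T, finrank K m = 2 ∧ x ≤ m := fun m hm => by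
    simp only [T, mem_filter, Finset.mem_univ, true_and] at hm
    exact ⟨hm.1, hm.2.1⟩
  have := hsplit ρ hρ hxρ
  rcases card_filter_le_eq_one_or_of_forall_exists_le (finrank_fin_fun K) hx hT (hq ▸ hTcard)
    hblock hρ hxρ with h | h <;> omega

end LineFamily

theorem stmt_13_general (K : Type) [Field K] [Fintype K] (q : ℕ) (hq : Fintype.card K = q)
    (hq_odd : Odd q) (S : Set (Submodule K (Fin 4 → K))) (hS : S ⊆ pgLine K)
    (h2 : P2 K S q) (h2a : P2a K S q) (h2b : P2b K S q) :
    ∀ π, IsSecant K S q π → ∀ x, IsBlack K S q x → x ≤ π →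
      {l | l ∈ S ∧ l ≤ π ∧ x ≤ l}.ncard = q := by
  rintro π ⟨hπ, hπS⟩ x hx hxπ
  have hpencil : {l | l ∈ S ∧ l ≤ π ∧ x ≤ l} = pencilS K S x π := by
    ext l
    simp only [pencilS, Set.mem_ofPred_eq, and_comm]
  rw [hpencil]
  have hq2 : 2 ≤ q := hq ▸ Fintype.one_lt_card
  obtain ⟨k, rfl⟩ := hq_odd
  rcases ncard_pencilS_eq_zero_or_of_isBlack (Nat.card_eq_fintype_card.trans hq) hS h2 h2a h2b
    hx hπ hxπ with h | h
  · rcases h2b π hπ hπS x hx.1 hxπ with h' | h' | h' <;> omega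
  · exact h

/-- If `π` is a secant plane and `x` a black point of `π`, then
there are exactly `q` lines of `π` through `x` belonging to `S`. -/
theorem stmt_13 (K : Type) [Field K] [Fintype K] (q : ℕ) (hq : Fintype.card K = q)
    (hq_odd : Odd q) (S : Set (Submodule K (Fin 4 → K))) (hS : S ⊆ pgLine K)
    (h1 : P1 K S q) (h2 : P2 K S q) (h2a : P2a K S q) (h2b : P2b K S q) :
    ∀ π, IsSecant K S q π → ∀ x, IsBlack K S q x → x ≤ π →
      {l | l ∈ S ∧ l ≤ π ∧ x ≤ l}.ncard = q :=
  stmt_13_general K q hq hq_odd S hS h2 h2a h2b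
end

section
/- For every tangent plane π, if μ_π denotes the number of black points contained in π, then |S| = μ_π·(q^2-q)/2 + (q^4+2q^2+q)/2. In particular, the number of black points in a tangent plane is the same for all tangent planes. -/
open Submodule Set

/-!
Count the incidences between the points of a tangent plane `π` and the lines of `S`. A line of
`S` inside `π` carries `q + 1` points of `π` and any other line exactly one, so the number of
incidences is `|S| + q |S_π| = |S| + q³`. By (P1) a point of `π` lies on `q²` or `q(q+1)/2`
lines of `S` according as it is black or not, and `π` has `q² + q + 1` points; solving for `|S|`
gives the formula, which is strictly increasing in `μ_π` since `q ≥ 2`.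
-/

open Module

section ProjectivePoints

open scoped Classical

variable {K V : Type*} [Field K] [AddCommGroup V] [Module K V]

theorem finrank_inf_add_one_of_not_le [FiniteDimensional K V] {U π : Submodule K V}
    (hπ : finrank K π + 1 = finrank K V) (hU : ¬ U ≤ π) :
    finrank K ↥(U ⊓ π) + 1 = finrank K U := by
  have hlt : finrank K π < finrank K ↥(U ⊔ π) :=
    finrank_lt_finrank_of_lt (lt_of_le_of_ne le_sup_right fun h => hU (h ▸ le_sup_left))
  have := finrank_sup_add_finrank_inf_eq U π
  have := (U ⊔ π).finrank_le
  omega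

variable [Finite V]

noncomputable def pointsOf (W : Submodule K V) : Finset (Submodule K V) :=
  (Set.toFinite {p : Submodule K V | finrank K p = 1 ∧ p ≤ W}).toFinset

@[simp]
theorem mem_pointsOf {W p : Submodule K V} : p ∈ pointsOf W ↔ finrank K p = 1 ∧ p ≤ W :=
  Set.Finite.mem_toFinset _

theorem card_pointsOf [Finite K] (W : Submodule K V) :
    (pointsOf W).card = ∑ i ∈ Finset.range (finrank K W), Nat.card K ^ i := by
  rw [← Projectivization.card_of_finrank K W rfl,
    Nat.card_congr (Projectivization.equivSubmodule K W), pointsOf,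
    ← Set.ncard_eq_toFinset_card, ← Nat.card_coe_set_eq]
  symm
  refine Nat.card_congr (((MapSubtype.orderIso W).toEquiv.subtypeEquiv
    (q := fun p => finrank K p.1 = 1) fun H => ?_).trans
    ((Equiv.subtypeSubtypeEquivSubtypeInter (· ≤ W) (fun p => finrank K p = 1)).trans
      (Equiv.subtypeEquivRight fun p => and_comm)))
  exact (finrank_map_subtype_eq W H).symm ▸ Iff.rfl

theorem filter_pointsOf_le (π l : Submodule K V) :
    (pointsOf π).filter (· ≤ l) = pointsOf (l ⊓ π) := by
  ext p
  simp only [Finset.mem_filter, mem_pointsOf, le_inf_iff]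
  tauto

theorem card_filter_pointsOf_le_of_finrank_eq_two [Finite K] {π l : Submodule K V}
    (hπ : finrank K π + 1 = finrank K V) (hl : finrank K l = 2) :
    ((pointsOf π).filter (· ≤ l)).card = if l ≤ π then Nat.card K + 1 else 1 := by
  rw [filter_pointsOf_le, card_pointsOf]
  split_ifs with h
  · rw [inf_of_le_left h, hl]
    simp [Finset.sum_range_succ, add_comm]
  · have := finrank_inf_add_one_of_not_le hπ h
    rw [show finrank K ↥(l ⊓ π) = 1 by omega]
    simp

theorem sum_ncard_lines_through_of_hyperplane [Finite K] {S : Set (Submodule K V)}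
    (hS : ∀ l ∈ S, finrank K l = 2) {π : Submodule K V} (hπ : finrank K π + 1 = finrank K V) :
    ∑ p ∈ pointsOf π, {l ∈ S | p ≤ l}.ncard = S.ncard + Nat.card K * {l ∈ S | l ≤ π}.ncard := by
  set T := (Set.toFinite S).toFinset
  have hT : ∀ P : Submodule K V → Prop, {l ∈ S | P l}.ncard = (T.filter P).card := fun P => by
    rw [← Set.ncard_coe_finset, Finset.coe_filter]
    simp [T]
  calc ∑ p ∈ pointsOf π, {l ∈ S | p ≤ l}.ncard
      = ∑ l ∈ T, ((pointsOf π).filter (· ≤ l)).card := by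
        simp only [hT]
        exact Finset.sum_card_bipartiteAbove_eq_sum_card_bipartiteBelow _
    _ = ∑ l ∈ T, if l ≤ π then Nat.card K + 1 else 1 :=
        Finset.sum_congr rfl fun l hl =>
          card_filter_pointsOf_le_of_finrank_eq_two hπ (hS l (by simpa [T] using hl))
    _ = S.ncard + Nat.card K * {l ∈ S | l ≤ π}.ncard := by
        rw [Finset.sum_ite, Finset.sum_const, Finset.sum_const, smul_eq_mul, smul_eq_mul, hT,
          Set.ncard_eq_toFinset_card S, ← T.card_filter_add_card_filter_not (· ≤ π)]
        ring

end ProjectivePoints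

theorem eq_tangent_formula_of_incidence_count {q μ s : ℕ} (hμ : μ ≤ q ^ 2 + q + 1)
    (h : s + q * q ^ 2 = μ * q ^ 2 + (q ^ 2 + q + 1 - μ) * (q * (q + 1) / 2)) :
    s = μ * ((q ^ 2 - q) / 2) + (q ^ 4 + 2 * q ^ 2 + q) / 2 := by
  obtain ⟨a, ha⟩ : 2 ∣ q * (q + 1) := (Nat.even_mul_succ_self q).two_dvd
  obtain ⟨b, hb⟩ : 2 ∣ q ^ 2 - q := by
    rw [sq, ← Nat.mul_sub_one]; exact (Nat.even_mul_pred_self q).two_dvd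
  obtain ⟨c, hc⟩ : 2 ∣ q ^ 4 + 2 * q ^ 2 + q := by
    apply Even.two_dvd; simp [Nat.even_add, Nat.even_pow, parity_simps]
  rw [ha, Nat.mul_div_cancel_left _ two_pos] at h
  rw [hb, hc, Nat.mul_div_cancel_left _ two_pos, Nat.mul_div_cancel_left _ two_pos]
  have hq : q ≤ q ^ 2 := Nat.le_self_pow two_ne_zero q
  qify [hμ, hq] at h ha hb hc ⊢
  linear_combination h + (μ / 2 - (q ^ 2 + q + 1) / 2 : ℚ) * ha + μ / 2 * hb + hc / 2

theorem finrank_add_one_of_mem_pgPlane {K : Type} [Field K] {π : Submodule K (Fin 4 → K)}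
    (hπ : π ∈ pgPlane K) : finrank K π + 1 = finrank K (Fin 4 → K) := by
  rw [hπ, finrank_fin_fun]

section TangentPlanes

variable {K : Type} [Field K] [Fintype K] {q : ℕ} {S : Set (Submodule K (Fin 4 → K))}

theorem card_pointsOf_of_mem_pgPlane (hq : Fintype.card K = q) {π : Submodule K (Fin 4 → K)}
    (hπ : π ∈ pgPlane K) : (pointsOf π).card = q ^ 2 + q + 1 := by
  rw [card_pointsOf, hπ, Nat.card_eq_fintype_card, hq]
  simp [Finset.sum_range_succ]
  ring

theorem sum_ncard_linesThru (hq : Fintype.card K = q) (hS : S ⊆ pgLine K)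
    {π : Submodule K (Fin 4 → K)} (hπ : π ∈ pgPlane K) :
    ∑ p ∈ pointsOf π, (linesThru K S p).ncard = S.ncard + q * (linesIn K S π).ncard := by
  rw [← hq, ← Nat.card_eq_fintype_card]
  exact sum_ncard_lines_through_of_hyperplane (fun l hl => hS hl)
    (finrank_add_one_of_mem_pgPlane hπ)

theorem ncard_black_eq_card_filter (π : Submodule K (Fin 4 → K)) :
    {p | IsBlack K S q p ∧ p ≤ π}.ncard =
      ((pointsOf π).filter fun p => (linesThru K S p).ncard = q ^ 2).card := by
  rw [← Set.ncard_coe_finset, Finset.coe_filter]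
  congr 1
  ext p
  simp only [IsBlack, pgPoint, mem_pointsOf, Set.mem_ofPred_eq]
  tauto

theorem sum_ncard_linesThru_eq_of_P1 (h1 : P1 K S q) (π : Submodule K (Fin 4 → K)) :
    ∑ p ∈ pointsOf π, (linesThru K S p).ncard =
      {p | IsBlack K S q p ∧ p ≤ π}.ncard * q ^ 2 +
        ((pointsOf π).card - {p | IsBlack K S q p ∧ p ≤ π}.ncard) * (q * (q + 1) / 2) := by
  rw [ncard_black_eq_card_filter, ← Finset.card_filter_add_card_filter_not
    (s := pointsOf π) (fun p => (linesThru K S p).ncard = q ^ 2), Nat.add_sub_cancel_left,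
    ← Finset.sum_filter_add_sum_filter_not _ (fun p => (linesThru K S p).ncard = q ^ 2)]
  congr 1
  · rw [Finset.sum_congr rfl fun p hp => (Finset.mem_filter.1 hp).2, Finset.sum_const,
      smul_eq_mul]
  · refine (Finset.sum_congr rfl fun p hp => ?_).trans (by rw [Finset.sum_const, smul_eq_mul])
    obtain ⟨hp, hblack⟩ := Finset.mem_filter.1 hp
    exact (h1.1 p (mem_pointsOf.1 hp).1).resolve_right hblack

theorem ncard_eq_of_isTangent (hq : Fintype.card K = q) (hS : S ⊆ pgLine K) (h1 : P1 K S q)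
    {π : Submodule K (Fin 4 → K)} (hπ : IsTangent K S q π) :
    S.ncard = {p | IsBlack K S q p ∧ p ≤ π}.ncard * ((q ^ 2 - q) / 2) +
      (q ^ 4 + 2 * q ^ 2 + q) / 2 := by
  have hcount := (sum_ncard_linesThru hq hS hπ.1).symm.trans (sum_ncard_linesThru_eq_of_P1 h1 π)
  rw [hπ.2, card_pointsOf_of_mem_pgPlane hq hπ.1] at hcount
  refine eq_tangent_formula_of_incidence_count ?_ hcount
  rw [← card_pointsOf_of_mem_pgPlane hq hπ.1, ncard_black_eq_card_filter]
  exact Finset.card_filter_le _ _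

end TangentPlanes

theorem stmt_15_general (K : Type) [Field K] [Fintype K] (q : ℕ) (hq : Fintype.card K = q)
    (S : Set (Submodule K (Fin 4 → K))) (hS : S ⊆ pgLine K)
    (h1 : P1 K S q) :
    (∀ π, IsTangent K S q π →
      S.ncard = {p | IsBlack K S q p ∧ p ≤ π}.ncard * ((q ^ 2 - q) / 2) +
        (q ^ 4 + 2 * q ^ 2 + q) / 2) ∧
    (∀ π π', IsTangent K S q π → IsTangent K S q π' →
      {p | IsBlack K S q p ∧ p ≤ π}.ncard =
        {p | IsBlack K S q p ∧ p ≤ π'}.ncard) := by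
  refine ⟨fun π hπ => ncard_eq_of_isTangent hq hS h1 hπ, fun π π' hπ hπ' => ?_⟩
  have hpos : 0 < (q ^ 2 - q) / 2 := by
    have : 2 ≤ q := hq ▸ Fintype.one_lt_card
    have : q * 2 ≤ q ^ 2 := by rw [sq]; exact Nat.mul_le_mul_left q this
    omega
  have := (ncard_eq_of_isTangent hq hS h1 hπ).symm.trans (ncard_eq_of_isTangent hq hS h1 hπ')
  exact Nat.eq_of_mul_eq_mul_right hpos (Nat.add_right_cancel this)

/-- For every tangent plane `π`, with `μ_π` the number of black
points of `π`, `|S| = μ_π(q^2-q)/2 + (q^4+2q^2+q)/2`; in particular the number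
of black points is the same in all tangent planes. -/
theorem stmt_15 (K : Type) [Field K] [Fintype K] (q : ℕ) (hq : Fintype.card K = q)
    (hq_odd : Odd q) (S : Set (Submodule K (Fin 4 → K))) (hS : S ⊆ pgLine K)
    (h1 : P1 K S q) (h2 : P2 K S q) (h2a : P2a K S q) (h2b : P2b K S q) :
    (∀ π, IsTangent K S q π →
      S.ncard = {p | IsBlack K S q p ∧ p ≤ π}.ncard * ((q ^ 2 - q) / 2) +
        (q ^ 4 + 2 * q ^ 2 + q) / 2) ∧
    (∀ π π', IsTangent K S q π → IsTangent K S q π' →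
      {p | IsBlack K S q p ∧ p ≤ π}.ncard =
        {p | IsBlack K S q p ∧ p ≤ π'}.ncard) :=
  stmt_15_general K q hq S hS h1
end
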